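/- arXiv:1806.11080 — 4 statements merged into one kernel-verified Lean document; each statement's English description precedes it below -/
import Mathlib

section
/- Let G be a graph with a 1-factorization F = {F1, ..., Fn} (n ≥ 2) such that F_{n-1} ∪ F_n is a Hamilton cycle of G, and let U = {∞_1, ..., ∞_n} be a set of new vertices disjoint from V(G). For a perfect matching F and new point ∞, let F ∨ ∞ denote the set of triples {x, y, ∞} for {x,y} ∈ F. Define the block collection B = (⋃_{i=1}^{n} F_i ∨ ∞_i) ∪ (⋃_{i=1}^{n-1} F_{i+1} ∨ ∞_i). Then (V(G) ∪ U, B) is a partial twofold triple system whose 2-block intersection graph is connected and bipartite. -/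
open Sum

/-- Blocks of the form `F_i ∨ ∞_i` (for `1 ≤ i ≤ n`) together with `F_{i+1} ∨ ∞_i`
(for `1 ≤ i ≤ n-1`), where the `1`-factors are encoded by fixed-point-free
involutions `f i : V → V`: the block for the edge `{x, f i x}` and point `∞_i` is
`{x, f i x, ∞_i}`. The new points `∞_1, ..., ∞_n` are the elements of `Fin n`. -/
def veeBlocks {V : Type*} [DecidableEq V] {n : ℕ} (f : Fin n → V → V) :
    Set (Finset (V ⊕ Fin n)) :=
  {T | ∃ (i : Fin n) (x : V), T = {inl x, inl (f i x), inr i}} ∪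
  {T | ∃ (i : Fin n) (x : V) (h : i.val + 1 < n),
    T = {inl x, inl (f ⟨i.val + 1, h⟩ x), inr i}}

/-- The 2-block intersection graph of the blocks `veeBlocks f`. -/
def veeBIG {V : Type*} [DecidableEq V] {n : ℕ} (f : Fin n → V → V) :
    SimpleGraph {T // T ∈ veeBlocks f} :=
  SimpleGraph.fromRel
    (fun T₁ T₂ => ((T₁ : Finset (V ⊕ Fin n)) ∩ (T₂ : Finset (V ⊕ Fin n))).card = 2)

section Aux

variable {V : Type*} [DecidableEq V] {n : ℕ}

/-- Two blocks sharing two points are equal, provided their `∞`-indices agree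
exactly when their matching indices do. -/
lemma veeShared {f : Fin n → V → V}
    (hfix : ∀ i x, f i x ≠ x) (hinv : ∀ i x, f i (f i x) = x)
    (hne : ∀ (i j : Fin n) (x : V), i ≠ j → f i x ≠ f j x)
    (a b k l : Fin n) (hab : k = l → a = b) (hkl' : a = b → k = l) (x y : V)
    (hcard : (({inl x, inl (f a x), inr k} : Finset (V ⊕ Fin n)) ∩
      {inl y, inl (f b y), inr l}).card = 2) :
    ({inl x, inl (f a x), inr k} : Finset (V ⊕ Fin n)) = {inl y, inl (f b y), inr l} := by
  by_cases hkl : k = l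
  · subst hkl
    obtain rfl : a = b := hab rfl
    have hz : ∃ z : V, inl z ∈ (({inl x, inl (f a x), inr k} : Finset (V ⊕ Fin n)) ∩
        {inl y, inl (f a y), inr k}) := by
      by_contra h
      push_neg at h
      have hsub : (({inl x, inl (f a x), inr k} : Finset (V ⊕ Fin n)) ∩
          {inl y, inl (f a y), inr k}) ⊆ {inr k} := by
        intro t ht
        rcases t with z | j
        · exact absurd ht (h z)
        · have := (Finset.mem_inter.1 ht).1
          simp only [Finset.mem_insert, Finset.mem_singleton] at this ⊢
          rcases this with h | h | h <;> simp_all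
      have := Finset.card_le_card hsub
      rw [hcard] at this
      simp at this
    obtain ⟨z, hz⟩ := hz
    rw [Finset.mem_inter] at hz
    obtain ⟨h1, h2⟩ := hz
    simp only [Finset.mem_insert, Finset.mem_singleton, Sum.inl.injEq, reduceCtorEq,
      or_false] at h1 h2
    rcases h1 with h1 | h1 <;> rcases h2 with h2 | h2
    · have : x = y := by rw [← h1, h2]
      rw [this]
    · have hx : x = f a y := by rw [← h1, h2]
      rw [hx, hinv]
      exact Finset.insert_comm _ _ _
    · have hy : y = f a x := by rw [← h2, h1]
      rw [hy, hinv]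
      exact Finset.insert_comm _ _ _
    · have : x = y := by rw [← hinv a x, ← h1, h2, hinv]
      rw [this]
  · exfalso
    have hab' : a ≠ b := fun h => hkl (hkl' h)
    have hsub : (({inl x, inl (f a x), inr k} : Finset (V ⊕ Fin n)) ∩
        {inl y, inl (f b y), inr l}) ⊆ {inl x, inl (f a x)} := by
      intro t ht
      rw [Finset.mem_inter] at ht
      obtain ⟨ht1, ht2⟩ := ht
      simp only [Finset.mem_insert, Finset.mem_singleton] at ht1 ht2 ⊢
      rcases ht1 with h | h | h
      · exact Or.inl h
      · exact Or.inr h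
      · subst h
        rcases ht2 with h | h | h <;> simp_all
    have heq : (({inl x, inl (f a x), inr k} : Finset (V ⊕ Fin n)) ∩
        {inl y, inl (f b y), inr l}) = {inl x, inl (f a x)} := by
      apply Finset.eq_of_subset_of_card_le hsub
      rw [hcard]
      exact le_trans (Finset.card_insert_le _ _) (by simp)
    have hx : inl x ∈ ({inl y, inl (f b y), inr l} : Finset (V ⊕ Fin n)) := by
      have : inl x ∈ (({inl x, inl (f a x), inr k} : Finset (V ⊕ Fin n)) ∩
          {inl y, inl (f b y), inr l}) := heq ▸ (by simp)
      exact (Finset.mem_inter.1 this).2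
    have hfx : inl (f a x) ∈ ({inl y, inl (f b y), inr l} : Finset (V ⊕ Fin n)) := by
      have : inl (f a x) ∈ (({inl x, inl (f a x), inr k} : Finset (V ⊕ Fin n)) ∩
          {inl y, inl (f b y), inr l}) := heq ▸ (by simp)
      exact (Finset.mem_inter.1 this).2
    simp only [Finset.mem_insert, Finset.mem_singleton, Sum.inl.injEq, reduceCtorEq,
      or_false] at hx hfx
    rcases hx with hx | hx
    · subst hx
      rcases hfx with h | h
      · exact hfix a x h
      · exact hne a b x hab' h
    · have hy : y = f b x := by rw [hx, hinv]
      subst hy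
      rcases hfx with h | h
      · exact hne a b x hab' h
      · rw [hinv] at h
        exact hfix a x h

variable (f : Fin n → V → V)

/-- Block `{x, f i x, ∞_i}` as an element of the block set. -/
def vA (i : Fin n) (x : V) : {T // T ∈ veeBlocks f} :=
  ⟨{inl x, inl (f i x), inr i}, Or.inl ⟨i, x, rfl⟩⟩

/-- Block `{x, f (i+1) x, ∞_i}` as an element of the block set. -/
def vB (i : Fin n) (x : V) (h : i.val + 1 < n) : {T // T ∈ veeBlocks f} :=
  ⟨{inl x, inl (f ⟨i.val + 1, h⟩ x), inr i}, Or.inr ⟨i, x, h, rfl⟩⟩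

variable {f}

lemma vA_eq (hinv : ∀ i x, f i (f i x) = x) (i : Fin n) (x : V) :
    vA f i (f i x) = vA f i x := by
  apply Subtype.ext
  show ({inl (f i x), inl (f i (f i x)), inr i} : Finset (V ⊕ Fin n))
    = {inl x, inl (f i x), inr i}
  rw [hinv]
  exact Finset.insert_comm _ _ _

lemma vB_eq (hinv : ∀ i x, f i (f i x) = x) (i : Fin n) (x : V) (h : i.val + 1 < n) :
    vB f i (f ⟨i.val + 1, h⟩ x) h = vB f i x h := by
  apply Subtype.ext
  show ({inl (f ⟨i.val + 1, h⟩ x), inl (f ⟨i.val + 1, h⟩ (f ⟨i.val + 1, h⟩ x)), inr i} :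
    Finset (V ⊕ Fin n)) = {inl x, inl (f ⟨i.val + 1, h⟩ x), inr i}
  rw [hinv]
  exact Finset.insert_comm _ _ _

lemma adj_vA_vB (hfix : ∀ i x, f i x ≠ x)
    (hne : ∀ (i j : Fin n) (x : V), i ≠ j → f i x ≠ f j x)
    (i : Fin n) (x : V) (h : i.val + 1 < n) :
    (veeBIG f).Adj (vA f i x) (vB f i x h) := by
  have hij : i ≠ ⟨i.val + 1, h⟩ := by
    intro hh; have := congrArg Fin.val hh; simp at this
  have hff : f i x ≠ f ⟨i.val + 1, h⟩ x := hne _ _ x hij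
  have hint : ((vA f i x).1 ∩ (vB f i x h).1) = {inl x, inr i} := by
    show ({inl x, inl (f i x), inr i} : Finset (V ⊕ Fin n)) ∩
      {inl x, inl (f ⟨i.val + 1, h⟩ x), inr i} = {inl x, inr i}
    ext t
    simp only [Finset.mem_inter, Finset.mem_insert, Finset.mem_singleton]
    constructor
    · rintro ⟨h1 | h1 | h1, h2 | h2 | h2⟩ <;>
        first
        | exact Or.inl ‹t = inl x›
        | exact Or.inr ‹t = inr i›
        | (exfalso; subst h1;
           simp only [Sum.inl.injEq, reduceCtorEq] at h2;
           first | exact hfix i x h2 | exact hff h2)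
    · rintro (rfl | rfl) <;> simp
  constructor
  · intro hEq
    have heq : (vA f i x).1 = (vB f i x h).1 := congrArg Subtype.val hEq
    have hm : inl (f i x) ∈ (vB f i x h).1 := heq ▸ (by simp [vA])
    simp only [vB, Finset.mem_insert, Finset.mem_singleton, Sum.inl.injEq,
      reduceCtorEq, or_false] at hm
    rcases hm with hm | hm
    · exact hfix i x hm
    · exact hff hm
  · left
    show ((vA f i x).1 ∩ (vB f i x h).1).card = 2
    rw [hint]
    exact Finset.card_pair (by simp)

lemma adj_vB_vA (hfix : ∀ i x, f i x ≠ x)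
    (i : Fin n) (x : V) (h : i.val + 1 < n) :
    (veeBIG f).Adj (vB f i x h) (vA f ⟨i.val + 1, h⟩ x) := by
  have hxf : x ≠ f ⟨i.val + 1, h⟩ x := fun hh => hfix _ x hh.symm
  have hii : i ≠ (⟨i.val + 1, h⟩ : Fin n) := by
    intro hh; have := congrArg Fin.val hh; simp at this
  have hint : ((vB f i x h).1 ∩ (vA f ⟨i.val + 1, h⟩ x).1)
      = {inl x, inl (f ⟨i.val + 1, h⟩ x)} := by
    show ({inl x, inl (f ⟨i.val + 1, h⟩ x), inr i} : Finset (V ⊕ Fin n)) ∩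
      {inl x, inl (f ⟨i.val + 1, h⟩ x), inr ⟨i.val + 1, h⟩}
      = {inl x, inl (f ⟨i.val + 1, h⟩ x)}
    ext t
    simp only [Finset.mem_inter, Finset.mem_insert, Finset.mem_singleton]
    constructor
    · rintro ⟨h1 | h1 | h1, h2 | h2 | h2⟩ <;>
        first
        | exact Or.inl ‹t = inl x›
        | exact Or.inr ‹t = inl (f ⟨i.val + 1, h⟩ x)›
        | (exfalso; subst h1;
           simp only [Sum.inr.injEq, reduceCtorEq] at h2;
           exact hii h2)
    · rintro (rfl | rfl) <;> simp
  constructor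
  · intro hEq
    have heq : (vB f i x h).1 = (vA f ⟨i.val + 1, h⟩ x).1 := congrArg Subtype.val hEq
    have hm : (inr i : V ⊕ Fin n) ∈ (vA f ⟨i.val + 1, h⟩ x).1 := heq ▸ (by simp [vB])
    simp only [vA, Finset.mem_insert, Finset.mem_singleton, reduceCtorEq,
      false_or, Sum.inr.injEq] at hm
    exact hii hm
  · left
    show ((vB f i x h).1 ∩ (vA f ⟨i.val + 1, h⟩ x).1).card = 2
    rw [hint]
    exact Finset.card_pair (by simp [hxf])

/-- Membership of two `inl`-points in a block determines the block. -/
lemma veePairBlock (hinv : ∀ i x, f i (f i x) = x)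
    (i m : Fin n) (a b z : V) (hab : a ≠ b)
    (ha : a = z ∨ a = f i z) (hb : b = z ∨ b = f i z) :
    f i a = b ∧ ({inl z, inl (f i z), inr m} : Finset (V ⊕ Fin n))
      = {inl a, inl b, inr m} := by
  rcases ha with rfl | ha
  · rcases hb with rfl | hb
    · exact absurd rfl hab
    · exact ⟨hb.symm, by rw [hb]⟩
  · rcases hb with rfl | hb
    · refine ⟨by rw [ha, hinv], ?_⟩
      rw [← ha]
      exact Finset.insert_comm _ _ _
    · exact absurd (ha.trans hb.symm) hab

lemma veePointBlock (hinv : ∀ i x, f i (f i x) = x)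
    (i m : Fin n) (a z : V) (ha : a = z ∨ a = f i z) :
    ({inl z, inl (f i z), inr m} : Finset (V ⊕ Fin n))
      = {inl a, inl (f i a), inr m} := by
  rcases ha with rfl | ha
  · rfl
  · rw [ha, hinv]
    exact Finset.insert_comm _ _ _

end Aux

theorem stmt4 {V : Type*} [DecidableEq V] [Fintype V] (G : SimpleGraph V)
    (n : ℕ) (hn : 2 ≤ n) (f : Fin n → V → V)
    -- each `f i` is a perfect matching (1-factor) of `G`:
    (hfix : ∀ i x, f i x ≠ x) (hinv : ∀ i x, f i (f i x) = x)
    (hadj : ∀ i x, G.Adj x (f i x))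
    -- the 1-factors partition the edge set of `G` (a 1-factorisation):
    (hcover : ∀ x y, G.Adj x y → ∃! i : Fin n, f i x = y)
    -- `F_{n-1} ∪ F_n` is a Hamilton cycle of `G`:
    (hham : ∃ (v : V)
        (p : (SimpleGraph.fromRel (fun x y =>
          f ⟨n - 2, by omega⟩ x = y ∨ f ⟨n - 1, by omega⟩ x = y)).Walk v v),
        p.IsHamiltonianCycle) :
    -- the blocks form a partial twofold triple system:
    (∀ x y : V ⊕ Fin n, x ≠ y →
      {T | T ∈ veeBlocks f ∧ x ∈ T ∧ y ∈ T}.ncard ≤ 2) ∧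
    -- whose 2-block intersection graph is connected and bipartite:
    (veeBIG f).Connected ∧
    (∃ g : {T // T ∈ veeBlocks f} → Bool,
      ∀ T₁ T₂, (veeBIG f).Adj T₁ T₂ → g T₁ ≠ g T₂) := by
  classical
  have hne : ∀ (i j : Fin n) (x : V), i ≠ j → f i x ≠ f j x := by
    intro i j x hij hEq
    obtain ⟨k, -, hu⟩ := hcover x (f i x) (hadj i x)
    exact hij ((hu i rfl).trans (hu j hEq.symm).symm)
  refine ⟨?_, ?_, ?_⟩
  · -- counting part
    intro x y hxy
    have bound2 : ∀ (B₁ B₂ : Finset (V ⊕ Fin n)) (S : Set (Finset (V ⊕ Fin n))),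
        S ⊆ {B₁, B₂} → S.ncard ≤ 2 := by
      intro B₁ B₂ S hS
      refine le_trans (Set.ncard_le_ncard hS (Set.toFinite _)) ?_
      refine le_trans (Set.ncard_insert_le _ _) ?_
      simp
    rcases x with a | i <;> rcases y with b | j
    · -- inl a, inl b
      have hab : a ≠ b := fun h => hxy (by rw [h])
      by_cases hE : ∃ i, f i a = b
      · obtain ⟨i₀, hi₀⟩ := hE
        have huniq : ∀ j, f j a = b → j = i₀ := by
          intro j hj
          obtain ⟨k, -, hu⟩ := hcover a b (hi₀ ▸ hadj i₀ a)
          rw [hu j hj, hu i₀ hi₀]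
        apply bound2 ({inl a, inl b, inr i₀}) ({inl a, inl b, inr ⟨i₀.val - 1, by omega⟩})
        rintro T ⟨hT, hTa, hTb⟩
        rcases hT with ⟨i, z, rfl⟩ | ⟨i, z, h, rfl⟩
        · simp only [Finset.mem_insert, Finset.mem_singleton, Sum.inl.injEq,
            reduceCtorEq, or_false] at hTa hTb
          obtain ⟨hf, hSet⟩ := veePairBlock hinv i i a b z hab hTa hTb
          obtain rfl := huniq i hf
          exact Or.inl hSet
        · simp only [Finset.mem_insert, Finset.mem_singleton, Sum.inl.injEq,
            reduceCtorEq, or_false] at hTa hTb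
          obtain ⟨hf, hSet⟩ := veePairBlock hinv ⟨i.val + 1, h⟩ i a b z hab hTa hTb
          have hi : (⟨i.val + 1, h⟩ : Fin n) = i₀ := huniq _ hf
          have hival : i.val + 1 = i₀.val := congrArg Fin.val hi
          have hieq : i = (⟨i₀.val - 1, by omega⟩ : Fin n) :=
            Fin.ext (show i.val = i₀.val - 1 by omega)
          rw [hSet, hieq]
          exact Or.inr rfl
      · have hS : {T | T ∈ veeBlocks f ∧ inl a ∈ T ∧ inl b ∈ T}
            = (∅ : Set (Finset (V ⊕ Fin n))) := by
          rw [Set.eq_empty_iff_forall_notMem]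
          rintro T ⟨hT, hTa, hTb⟩
          apply hE
          rcases hT with ⟨i, z, rfl⟩ | ⟨i, z, h, rfl⟩ <;>
            simp only [Finset.mem_insert, Finset.mem_singleton, Sum.inl.injEq,
              reduceCtorEq, or_false] at hTa hTb
          · exact ⟨i, (veePairBlock hinv i i a b z hab hTa hTb).1⟩
          · exact ⟨_, (veePairBlock hinv ⟨i.val + 1, h⟩ i a b z hab hTa hTb).1⟩
        rw [hS, Set.ncard_empty]
        omega
    · -- inl a, inr j
      apply bound2 ({inl a, inl (f j a), inr j})
        (if h : j.val + 1 < n then {inl a, inl (f ⟨j.val + 1, h⟩ a), inr j}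
          else {inl a, inl (f j a), inr j})
      rintro T ⟨hT, hTa, hTj⟩
      rcases hT with ⟨i, z, rfl⟩ | ⟨i, z, h, rfl⟩
      · simp only [Finset.mem_insert, Finset.mem_singleton, Sum.inl.injEq,
          Sum.inr.injEq, reduceCtorEq, or_false, false_or] at hTa hTj
        obtain rfl : i = j := hTj.symm ▸ rfl
        exact Or.inl (veePointBlock hinv i i a z hTa)
      · simp only [Finset.mem_insert, Finset.mem_singleton, Sum.inl.injEq,
          Sum.inr.injEq, reduceCtorEq, or_false, false_or] at hTa hTj
        obtain rfl : i = j := hTj.symm ▸ rfl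
        right
        rw [dif_pos h]
        exact veePointBlock hinv ⟨i.val + 1, h⟩ i a z hTa
    · -- inr i, inl b : same as previous case with the pair swapped
      have hswap : {T | T ∈ veeBlocks f ∧ inr i ∈ T ∧ inl b ∈ T}
          = {T | T ∈ veeBlocks f ∧ inl b ∈ T ∧ (inr i : V ⊕ Fin n) ∈ T} := by
        ext T; constructor <;> rintro ⟨h1, h2, h3⟩ <;> exact ⟨h1, h3, h2⟩
      rw [hswap]
      apply bound2 ({inl b, inl (f i b), inr i})
        (if h : i.val + 1 < n then {inl b, inl (f ⟨i.val + 1, h⟩ b), inr i}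
          else {inl b, inl (f i b), inr i})
      rintro T ⟨hT, hTb, hTi⟩
      rcases hT with ⟨k, z, rfl⟩ | ⟨k, z, h, rfl⟩
      · simp only [Finset.mem_insert, Finset.mem_singleton, Sum.inl.injEq,
          Sum.inr.injEq, reduceCtorEq, or_false, false_or] at hTb hTi
        obtain rfl : k = i := hTi.symm ▸ rfl
        exact Or.inl (veePointBlock hinv k k b z hTb)
      · simp only [Finset.mem_insert, Finset.mem_singleton, Sum.inl.injEq,
          Sum.inr.injEq, reduceCtorEq, or_false, false_or] at hTb hTi
        obtain rfl : k = i := hTi.symm ▸ rfl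
        right
        rw [dif_pos h]
        exact veePointBlock hinv ⟨k.val + 1, h⟩ k b z hTb
    · -- inr i, inr j
      have hij : i ≠ j := fun h => hxy (by rw [h])
      have hS : {T | T ∈ veeBlocks f ∧ inr i ∈ T ∧ inr j ∈ T}
          = (∅ : Set (Finset (V ⊕ Fin n))) := by
        rw [Set.eq_empty_iff_forall_notMem]
        rintro T ⟨hT, hTi, hTj⟩
        apply hij
        rcases hT with ⟨k, z, rfl⟩ | ⟨k, z, h, rfl⟩ <;>
          simp only [Finset.mem_insert, Finset.mem_singleton, Sum.inr.injEq,
            reduceCtorEq, or_false, false_or] at hTi hTj <;>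
          rw [hTi, hTj]
      rw [hS, Set.ncard_empty]
      omega
  · -- connectivity
    obtain ⟨v, p, hp⟩ := hham
    have ha2 : n - 2 < n := by omega
    have hb2 : n - 1 < n := by omega
    have hQlt : (⟨n - 2, ha2⟩ : Fin n).val + 1 < n := by show n - 2 + 1 < n; omega
    have hb' : (⟨(⟨n - 2, ha2⟩ : Fin n).val + 1, hQlt⟩ : Fin n) = ⟨n - 1, hb2⟩ :=
      Fin.ext (show n - 2 + 1 = n - 1 by omega)
    -- chain from any A-block down to the A-block at level n-2
    have chain : ∀ (d : ℕ) (i : Fin n) (x : V), i.val + d = n - 2 →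
        (veeBIG f).Reachable (vA f i x) (vA f ⟨n - 2, ha2⟩ x) := by
      intro d
      induction d with
      | zero =>
        intro i x hi
        have : i = (⟨n - 2, ha2⟩ : Fin n) := Fin.ext (show i.val = n - 2 by omega)
        rw [this]
      | succ d ih =>
        intro i x hi
        have h : i.val + 1 < n := by omega
        have step1 := (adj_vA_vB hfix hne i x h).reachable
        have step2 := (adj_vB_vA hfix i x h).reachable
        exact (step1.trans step2).trans
          (ih ⟨i.val + 1, h⟩ x (show i.val + 1 + d = n - 2 by omega))
    have reachA : ∀ (i : Fin n) (x : V),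
        (veeBIG f).Reachable (vA f i x) (vA f ⟨n - 2, ha2⟩ x) := by
      intro i x
      by_cases hi : i.val ≤ n - 2
      · exact chain (n - 2 - i.val) i x (by omega)
      · have : i = (⟨n - 1, hb2⟩ : Fin n) :=
          Fin.ext (show i.val = n - 1 by have := i.isLt; omega)
        subst this
        have h1 : (veeBIG f).Adj (vB f ⟨n - 2, ha2⟩ x hQlt) (vA f ⟨n - 1, hb2⟩ x) :=
          hb' ▸ adj_vB_vA hfix ⟨n - 2, ha2⟩ x hQlt
        exact h1.symm.reachable.trans
          (adj_vA_vB hfix hne ⟨n - 2, ha2⟩ x hQlt).symm.reachable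
    have reachB : ∀ (i : Fin n) (x : V) (h : i.val + 1 < n),
        (veeBIG f).Reachable (vB f i x h) (vA f ⟨n - 2, ha2⟩ x) := by
      intro i x h
      exact (adj_vB_vA hfix i x h).reachable.trans (reachA _ x)
    -- every block is reachable to some vA f ⟨n-2⟩ x
    have reachBlock : ∀ T : {T // T ∈ veeBlocks f}, ∃ x : V,
        (veeBIG f).Reachable T (vA f ⟨n - 2, ha2⟩ x) := by
      rintro ⟨T, hT⟩
      rcases hT with ⟨i, x, hTx⟩ | ⟨i, x, h, hTx⟩
      · exact ⟨x, (show (⟨T, _⟩ : {T // T ∈ veeBlocks f}) = vA f i x from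
          Subtype.ext hTx) ▸ reachA i x⟩
      · exact ⟨x, (show (⟨T, _⟩ : {T // T ∈ veeBlocks f}) = vB f i x h from
          Subtype.ext hTx) ▸ reachB i x h⟩
    -- Hamilton cycle gives connectivity between the vA f ⟨n-2⟩ x's
    have hHpre : ∀ x y : V, (SimpleGraph.fromRel (fun x y =>
        f ⟨n - 2, by omega⟩ x = y ∨ f ⟨n - 1, by omega⟩ x = y)).Reachable x y :=
      fun x y => ⟨(p.takeUntil x (hp.mem_support x)).reverse.append
        (p.takeUntil y (hp.mem_support y))⟩
    have hstep : ∀ u w : V, (SimpleGraph.fromRel (fun x y =>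
        f ⟨n - 2, by omega⟩ x = y ∨ f ⟨n - 1, by omega⟩ x = y)).Adj u w →
        (veeBIG f).Reachable (vA f ⟨n - 2, ha2⟩ u) (vA f ⟨n - 2, ha2⟩ w) := by
      intro u w huw
      obtain ⟨-, hr⟩ := huw
      have hr' : f (⟨n - 2, ha2⟩ : Fin n) u = w ∨ f (⟨n - 1, hb2⟩ : Fin n) u = w := by
        rcases hr with (h | h) | (h | h)
        · exact Or.inl h
        · exact Or.inr h
        · exact Or.inl (by rw [← h]; exact hinv _ w)
        · exact Or.inr (by rw [← h]; exact hinv _ w)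
      rcases hr' with h | h
      · subst h
        exact ((vA_eq hinv ⟨n - 2, ha2⟩ u).symm ▸ SimpleGraph.Reachable.refl _ :
          (veeBIG f).Reachable (vA f ⟨n - 2, ha2⟩ u) (vA f ⟨n - 2, ha2⟩ (f ⟨n - 2, ha2⟩ u)))
      · subst h
        have hQeq : vB f ⟨n - 2, ha2⟩ (f ⟨n - 1, hb2⟩ u) hQlt = vB f ⟨n - 2, ha2⟩ u hQlt := by
          rw [← hb']
          exact vB_eq hinv ⟨n - 2, ha2⟩ u hQlt
        have r1 := (adj_vA_vB hfix hne ⟨n - 2, ha2⟩ u hQlt).reachable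
        have r2 := (adj_vA_vB hfix hne ⟨n - 2, ha2⟩ (f ⟨n - 1, hb2⟩ u) hQlt).symm.reachable
        exact r1.trans (hQeq ▸ r2)
    have hHP : ∀ u w : V, (SimpleGraph.fromRel (fun x y =>
        f ⟨n - 2, by omega⟩ x = y ∨ f ⟨n - 1, by omega⟩ x = y)).Reachable u w →
        (veeBIG f).Reachable (vA f ⟨n - 2, ha2⟩ u) (vA f ⟨n - 2, ha2⟩ w) := by
      intro u w hr
      obtain ⟨q⟩ := hr
      induction q with
      | nil => exact SimpleGraph.Reachable.refl _
      | cons hadj' q' ih => exact (hstep _ _ hadj').trans ih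
    haveI : Nonempty {T // T ∈ veeBlocks f} := ⟨vA f ⟨n - 2, ha2⟩ v⟩
    refine ⟨fun T₁ T₂ => ?_⟩
    obtain ⟨x₁, h1⟩ := reachBlock T₁
    obtain ⟨x₂, h2⟩ := reachBlock T₂
    exact (h1.trans (hHP x₁ x₂ (hHpre x₁ x₂))).trans h2.symm
  · -- bipartite
    refine ⟨fun T => if (∃ (i : Fin n) (x : V) (h : i.val + 1 < n),
      T.1 = {inl x, inl (f ⟨i.val + 1, h⟩ x), inr i}) then true else false, ?_⟩
    intro T₁ T₂ hAdj hg
    obtain ⟨hne12, hor⟩ := hAdj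
    have hcard : (T₁.1 ∩ T₂.1).card = 2 := by
      rcases hor with h | h
      · exact h
      · rw [Finset.inter_comm]; exact h
    by_cases hB1 : (∃ (i : Fin n) (x : V) (h : i.val + 1 < n),
        T₁.1 = {inl x, inl (f ⟨i.val + 1, h⟩ x), inr i}) <;>
      by_cases hB2 : (∃ (i : Fin n) (x : V) (h : i.val + 1 < n),
        T₂.1 = {inl x, inl (f ⟨i.val + 1, h⟩ x), inr i})
    · obtain ⟨i, x, h, hT1⟩ := hB1
      obtain ⟨j, y, h', hT2⟩ := hB2
      apply hne12
      apply Subtype.ext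
      rw [hT1, hT2]
      rw [hT1, hT2] at hcard
      exact veeShared hfix hinv hne ⟨i.val + 1, h⟩ ⟨j.val + 1, h'⟩ i j
        (fun hh => by subst hh; rfl)
        (fun hh => Fin.ext (by have := congrArg Fin.val hh; simp at this; omega))
        x y hcard
    · simp only [if_pos hB1, if_neg hB2] at hg
      exact Bool.noConfusion hg
    · simp only [if_neg hB1, if_pos hB2] at hg
      exact Bool.noConfusion hg
    · have hA1 : ∃ (i : Fin n) (x : V), T₁.1 = {inl x, inl (f i x), inr i} := by
        rcases T₁.2 with h | h
        · exact h
        · exact absurd h hB1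
      have hA2 : ∃ (i : Fin n) (x : V), T₂.1 = {inl x, inl (f i x), inr i} := by
        rcases T₂.2 with h | h
        · exact h
        · exact absurd h hB2
      obtain ⟨i, x, hT1⟩ := hA1
      obtain ⟨j, y, hT2⟩ := hA2
      apply hne12
      apply Subtype.ext
      rw [hT1, hT2]
      rw [hT1, hT2] at hcard
      exact veeShared hfix hinv hne i j i j id id x y hcard
end

section
/- Fix an integer t > 0 and consider the 2t−1 difference triples D = {(2j−1, 3t−j, 3t+j−1) : 1 ≤ j ≤ t} ∪ {(2j, 5t−j, 5t+j) : 1 ≤ j ≤ t−1} (Stern–Lenz type Construction 1, i.e., triples (1,3t−1,3t), (3,3t−2,3t+1), ..., (2t−1,2t,4t−1) and (2,5t−1,5t+1), (4,5t−2,5t+2), ..., (2t−2,4t+1,6t−1)). Then every integer d with 1 ≤ d ≤ 6t and d ∉ {4t, 5t, 6t} occurs as an entry of exactly one triple in D, and the triples are pairwise disjoint. -/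
/-- `d` is an entry of the difference triple `tr`. -/
def entryOf (d : ℕ) (tr : ℕ × ℕ × ℕ) : Prop :=
  d = tr.1 ∨ d = tr.2.1 ∨ d = tr.2.2

theorem stmt6 (t : ℕ) (ht : 0 < t) :
    let D : Finset (ℕ × ℕ × ℕ) :=
      ((Finset.Icc 1 t).image fun j => (2 * j - 1, 3 * t - j, 3 * t + j - 1)) ∪
      ((Finset.Icc 1 (t - 1)).image fun j => (2 * j, 5 * t - j, 5 * t + j))
    (∀ d : ℕ, 1 ≤ d → d ≤ 6 * t → d ≠ 4 * t → d ≠ 5 * t → d ≠ 6 * t →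
      ∃! tr : ℕ × ℕ × ℕ, tr ∈ D ∧ entryOf d tr) ∧
    (∀ tr₁ ∈ D, ∀ tr₂ ∈ D, tr₁ ≠ tr₂ → ∀ d : ℕ, entryOf d tr₁ → ¬ entryOf d tr₂) := by
  intro D
  have hmem : ∀ tr : ℕ × ℕ × ℕ, tr ∈ D ↔
      (∃ j, (1 ≤ j ∧ j ≤ t) ∧ (2 * j - 1, 3 * t - j, 3 * t + j - 1) = tr) ∨
      (∃ j, (1 ≤ j ∧ j ≤ t - 1) ∧ (2 * j, 5 * t - j, 5 * t + j) = tr) := by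
    intro tr
    simp only [D, Finset.mem_union, Finset.mem_image, Finset.mem_Icc]
  -- uniqueness core
  have huniq : ∀ tr₁ ∈ D, ∀ tr₂ ∈ D, ∀ d : ℕ,
      entryOf d tr₁ → entryOf d tr₂ → tr₁ = tr₂ := by
    intro tr₁ h₁ tr₂ h₂ d e₁ e₂
    rw [hmem] at h₁ h₂
    rcases h₁ with ⟨j, ⟨hj1, hj2⟩, rfl⟩ | ⟨j, ⟨hj1, hj2⟩, rfl⟩ <;>
      rcases h₂ with ⟨k, ⟨hk1, hk2⟩, rfl⟩ | ⟨k, ⟨hk1, hk2⟩, rfl⟩ <;>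
      simp only [entryOf, Prod.mk.injEq] at e₁ e₂ ⊢ <;> omega
  constructor
  · intro d h1 h2 h3 h4 h5
    have hex : ∃ tr : ℕ × ℕ × ℕ, tr ∈ D ∧ entryOf d tr := by
      by_cases hlt : d ≤ 2 * t - 1
      · rcases Nat.even_or_odd d with ⟨k, hk⟩ | ⟨k, hk⟩
        · refine ⟨(2 * k, 5 * t - k, 5 * t + k), ?_, ?_⟩
          · rw [hmem]; right; exact ⟨k, ⟨by omega, by omega⟩, rfl⟩
          · simp only [entryOf]; omega
        · refine ⟨(2 * (k + 1) - 1, 3 * t - (k + 1), 3 * t + (k + 1) - 1), ?_, ?_⟩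
          · rw [hmem]; left; exact ⟨k + 1, ⟨by omega, by omega⟩, rfl⟩
          · simp only [entryOf]; omega
      · by_cases h3t : d ≤ 3 * t - 1
        · refine ⟨(2 * (3 * t - d) - 1, 3 * t - (3 * t - d), 3 * t + (3 * t - d) - 1), ?_, ?_⟩
          · rw [hmem]; left; exact ⟨3 * t - d, ⟨by omega, by omega⟩, rfl⟩
          · simp only [entryOf]; omega
        · by_cases h4t : d ≤ 4 * t - 1
          · refine ⟨(2 * (d - 3 * t + 1) - 1, 3 * t - (d - 3 * t + 1),
                3 * t + (d - 3 * t + 1) - 1), ?_, ?_⟩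
            · rw [hmem]; left; exact ⟨d - 3 * t + 1, ⟨by omega, by omega⟩, rfl⟩
            · simp only [entryOf]; omega
          · by_cases h5t : d ≤ 5 * t - 1
            · refine ⟨(2 * (5 * t - d), 5 * t - (5 * t - d), 5 * t + (5 * t - d)), ?_, ?_⟩
              · rw [hmem]; right; exact ⟨5 * t - d, ⟨by omega, by omega⟩, rfl⟩
              · simp only [entryOf]; omega
            · refine ⟨(2 * (d - 5 * t), 5 * t - (d - 5 * t), 5 * t + (d - 5 * t)), ?_, ?_⟩
              · rw [hmem]; right; exact ⟨d - 5 * t, ⟨by omega, by omega⟩, rfl⟩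
              · simp only [entryOf]; omega
    obtain ⟨tr, htr, he⟩ := hex
    exact ⟨tr, ⟨htr, he⟩, fun y ⟨hy, hye⟩ => huniq y hy tr htr d hye he⟩
  · intro tr₁ h₁ tr₂ h₂ hne d e₁ e₂
    exact hne (huniq tr₁ h₁ tr₂ h₂ d e₁ e₂)
end

section
/- Fix an integer t > 0 and consider the 2t−1 difference triples D = {(2j−1, 5t+1−j, 5t+j) : 1 ≤ j ≤ t} ∪ {(2j, 3t−j, 3t+j) : 1 ≤ j ≤ t−1} (Construction 2, i.e., (1,5t,5t+1), (3,5t−1,5t+2), ..., (2t−1,4t+1,6t) and (2,3t−1,3t+1), (4,3t−2,3t+2), ..., (2t−2,2t+1,4t−1)). Then every integer d with 1 ≤ d ≤ 6t and d ∉ {2t, 3t, 4t} occurs as an entry of exactly one triple of D. -/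
theorem stmt7 (t : ℕ) (ht : 0 < t) :
    let D : Finset (ℕ × ℕ × ℕ) :=
      ((Finset.Icc 1 t).image fun j => (2 * j - 1, 5 * t + 1 - j, 5 * t + j)) ∪
      ((Finset.Icc 1 (t - 1)).image fun j => (2 * j, 3 * t - j, 3 * t + j))
    ∀ d : ℕ, 1 ≤ d → d ≤ 6 * t → d ≠ 2 * t → d ≠ 3 * t → d ≠ 4 * t →
      ∃! tr : ℕ × ℕ × ℕ, tr ∈ D ∧ entryOf d tr := by
  intro D d hd1 hd6 h2 h3 h4
  have key : ∀ tr : ℕ × ℕ × ℕ, (tr ∈ D ∧ entryOf d tr) ↔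
      (∃ j, 1 ≤ j ∧ j ≤ t ∧ tr = (2*j-1, 5*t+1-j, 5*t+j) ∧
        (d = 2*j-1 ∨ d = 5*t+1-j ∨ d = 5*t+j)) ∨
      (∃ j, 1 ≤ j ∧ j ≤ t-1 ∧ tr = (2*j, 3*t-j, 3*t+j) ∧
        (d = 2*j ∨ d = 3*t-j ∨ d = 3*t+j)) := by
    intro tr
    simp only [D, Finset.mem_union, Finset.mem_image, Finset.mem_Icc, entryOf]
    constructor
    · rintro ⟨⟨j, ⟨hj1, hj2⟩, rfl⟩ | ⟨j, ⟨hj1, hj2⟩, rfl⟩, hent⟩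
      · exact Or.inl ⟨j, hj1, hj2, rfl, hent⟩
      · exact Or.inr ⟨j, hj1, hj2, rfl, hent⟩
    · rintro (⟨j, hj1, hj2, rfl, hent⟩ | ⟨j, hj1, hj2, rfl, hent⟩)
      · exact ⟨Or.inl ⟨j, ⟨hj1, hj2⟩, rfl⟩, hent⟩
      · exact ⟨Or.inr ⟨j, ⟨hj1, hj2⟩, rfl⟩, hent⟩
  have uniq : ∀ tr tr' : ℕ × ℕ × ℕ, (tr ∈ D ∧ entryOf d tr) →
      (tr' ∈ D ∧ entryOf d tr') → tr = tr' := by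
    intro tr tr' h h'
    rw [key] at h h'
    rcases h with ⟨j, hj1, hj2, rfl, hd⟩ | ⟨j, hj1, hj2, rfl, hd⟩ <;>
      rcases h' with ⟨j', hj1', hj2', rfl, hd'⟩ | ⟨j', hj1', hj2', rfl, hd'⟩
    · have : j = j' := by omega
      subst this; rfl
    · exfalso; omega
    · exfalso; omega
    · have : j = j' := by omega
      subst this; rfl
  have exist : ∃ tr, tr ∈ D ∧ entryOf d tr := by
    by_cases hlt : d < 2*t
    · by_cases hpar : d % 2 = 1
      · exact ⟨_, (key _).2 (Or.inl ⟨(d+1)/2, by omega, by omega, rfl, by omega⟩)⟩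
      · exact ⟨_, (key _).2 (Or.inr ⟨d/2, by omega, by omega, rfl, by omega⟩)⟩
    · by_cases h3t : d < 3*t
      · exact ⟨_, (key _).2 (Or.inr ⟨3*t - d, by omega, by omega, rfl, by omega⟩)⟩
      · by_cases h4t : d < 4*t
        · exact ⟨_, (key _).2 (Or.inr ⟨d - 3*t, by omega, by omega, rfl, by omega⟩)⟩
        · by_cases h5t : d ≤ 5*t
          · exact ⟨_, (key _).2 (Or.inl ⟨5*t + 1 - d, by omega, by omega, rfl, by omega⟩)⟩
          · exact ⟨_, (key _).2 (Or.inl ⟨d - 5*t, by omega, by omega, rfl, by omega⟩)⟩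
  obtain ⟨tr, h⟩ := exist
  exact ⟨tr, h, fun tr' h' => uniq tr' tr h' h⟩
end

section
/- Let (V, B) be a twofold triple system containing, for some distinct points a, b, c ∈ V and distinct points p, q, r ∈ V, the four blocks {a,b,p}, {b,c,q}, {c,a,r}, {p,q,r}, and suppose {a,b,c} ∉ B. Define B' = (B \ {{a,b,p}, {b,c,q}, {c,a,r}, {p,q,r}}) ∪ {{p,q,b}, {p,r,a}, {q,r,c}, {a,b,c}}. Then (V, B') is again a twofold triple system: every 2-element subset of V occurs in exactly 2 blocks of B'. -/
theorem countP_singleton' {α : Type*} (p : α → Prop) [DecidablePred p] (s : α) :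
    Multiset.countP p {s} = if p s then 1 else 0 := by
  rw [show ({s} : Multiset α) = s ::ₘ 0 from rfl, Multiset.countP_cons]
  simp

set_option maxHeartbeats 1000000 in
theorem trade_pair_count {V : Type*} [DecidableEq V] (a b c p q r : V)
    (hab : a ≠ b) (hac : a ≠ c) (hbc : b ≠ c)
    (hpq : p ≠ q) (hpr : p ≠ r) (hqr : q ≠ r)
    (hap : a ≠ p) (haq : a ≠ q) (har : a ≠ r)
    (hbp : b ≠ p) (hbq : b ≠ q) (hbr : b ≠ r)
    (hcp : c ≠ p) (hcq : c ≠ q) (hcr : c ≠ r) (x y : V) :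
    (({{a,b,p}, {b,c,q}, {c,a,r}, {p,q,r}} : Multiset (Finset V)).countP
        fun T => x ∈ T ∧ y ∈ T) =
      (({{p,q,b}, {p,r,a}, {q,r,c}, {a,b,c}} : Multiset (Finset V)).countP
        fun T => x ∈ T ∧ y ∈ T) := by
  have hx : x = a ∨ x = b ∨ x = c ∨ x = p ∨ x = q ∨ x = r ∨
      (x ≠ a ∧ x ≠ b ∧ x ≠ c ∧ x ≠ p ∧ x ≠ q ∧ x ≠ r) := by tauto
  have hy : y = a ∨ y = b ∨ y = c ∨ y = p ∨ y = q ∨ y = r ∨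
      (y ≠ a ∧ y ≠ b ∧ y ≠ c ∧ y ≠ p ∧ y ≠ q ∧ y ≠ r) := by tauto
  simp only [Multiset.insert_eq_cons, Multiset.countP_cons, Multiset.countP_zero,
    Finset.mem_insert, Finset.mem_singleton]
  rcases hx with rfl | rfl | rfl | rfl | rfl | rfl | ⟨h1,h2,h3,h4,h5,h6⟩ <;>
    rcases hy with rfl | rfl | rfl | rfl | rfl | rfl | ⟨g1,g2,g3,g4,g5,g6⟩ <;>
    simp [Multiset.insert_eq_cons, Multiset.countP_cons, Multiset.countP_zero,
      countP_singleton', Finset.mem_insert, Finset.mem_singleton,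
      hab, hac, hbc, hpq, hpr, hqr, hap, haq, har, hbp, hbq, hbr, hcp, hcq, hcr,
      hab.symm, hac.symm, hbc.symm, hpq.symm, hpr.symm, hqr.symm, hap.symm, haq.symm,
      har.symm, hbp.symm, hbq.symm, hbr.symm, hcp.symm, hcq.symm, hcr.symm, *]

theorem stmt17 {V : Type*} [DecidableEq V] (B : Multiset (Finset V))
    (a b c p q r : V)
    (hab : a ≠ b) (hac : a ≠ c) (hbc : b ≠ c)
    (hpq : p ≠ q) (hpr : p ≠ r) (hqr : q ≠ r)
    -- `(V, B)` is a twofold triple system: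
    (hblocks : ∀ T ∈ B, T.card = 3)
    (hTTS : ∀ x y : V, x ≠ y → (B.countP fun T => x ∈ T ∧ y ∈ T) = 2)
    -- `B` contains the four blocks of the trade:
    (hsub : ({{a,b,p}, {b,c,q}, {c,a,r}, {p,q,r}} : Multiset (Finset V)) ≤ B)
    -- and `{a,b,c}` is not a block of `B`:
    (habsent : ({a,b,c} : Finset V) ∉ B) :
    ∀ x y : V, x ≠ y →
      (((B - ({{a,b,p}, {b,c,q}, {c,a,r}, {p,q,r}} : Multiset (Finset V))) +
          ({{p,q,b}, {p,r,a}, {q,r,c}, {a,b,c}} : Multiset (Finset V))).countP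
        fun T => x ∈ T ∧ y ∈ T) = 2 := by
  have m1 : ({a,b,p} : Finset V) ∈ B := Multiset.mem_of_le hsub (by simp)
  have m2 : ({b,c,q} : Finset V) ∈ B := Multiset.mem_of_le hsub (by simp)
  have m3 : ({c,a,r} : Finset V) ∈ B := Multiset.mem_of_le hsub (by simp)
  -- distinctness from block cardinalities
  have hap : a ≠ p := by
    intro h
    have h3 := hblocks _ m1
    have he : ({a,b,p} : Finset V) = {a,b} := by rw [← h]; try (ext z; simp; try tauto)
    rw [he, Finset.card_pair hab] at h3
    omega
  have hbp : b ≠ p := by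
    intro h
    have h3 := hblocks _ m1
    have he : ({a,b,p} : Finset V) = {a,b} := by rw [← h]; try (ext z; simp; try tauto)
    rw [he, Finset.card_pair hab] at h3
    omega
  have hbq : b ≠ q := by
    intro h
    have h3 := hblocks _ m2
    have he : ({b,c,q} : Finset V) = {b,c} := by rw [← h]; try (ext z; simp; try tauto)
    rw [he, Finset.card_pair hbc] at h3
    omega
  have hcq : c ≠ q := by
    intro h
    have h3 := hblocks _ m2
    have he : ({b,c,q} : Finset V) = {b,c} := by rw [← h]; try (ext z; simp; try tauto)
    rw [he, Finset.card_pair hbc] at h3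
    omega
  have hcr : c ≠ r := by
    intro h
    have h3 := hblocks _ m3
    have he : ({c,a,r} : Finset V) = {c,a} := by rw [← h]; try (ext z; simp; try tauto)
    rw [he, Finset.card_pair hac.symm] at h3
    omega
  have har : a ≠ r := by
    intro h
    have h3 := hblocks _ m3
    have he : ({c,a,r} : Finset V) = {c,a} := by rw [← h]; try (ext z; simp; try tauto)
    rw [he, Finset.card_pair hac.symm] at h3
    omega
  -- distinctness from absence of {a,b,c}
  have haq : a ≠ q := by
    intro h
    apply habsent
    have he : ({b,c,q} : Finset V) = {a,b,c} := by rw [← h]; try (ext z; simp; try tauto)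
    rwa [he] at m2
  have hbr : b ≠ r := by
    intro h
    apply habsent
    have he : ({c,a,r} : Finset V) = {a,b,c} := by rw [← h]; try (ext z; simp; try tauto)
    rwa [he] at m3
  have hcp : c ≠ p := by
    intro h
    apply habsent
    have he : ({a,b,p} : Finset V) = {a,b,c} := by rw [← h]
    rwa [he] at m1
  intro x y hxy
  have key := trade_pair_count a b c p q r hab hac hbc hpq hpr hqr
    hap haq har hbp hbq hbr hcp hcq hcr x y
  rw [Multiset.countP_add, ← key, ← Multiset.countP_add,
    tsub_add_cancel_of_le hsub, hTTS x y hxy]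
end
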